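/- arXiv:2008.06737 — 4 statements merged into one kernel-verified Lean document; each statement's English description precedes it below -/
import Mathlib

section
/- Let A be a closed operator on a Hilbert space and T a bounded invertible operator with T(D(A)) = D(A) and T A = (A - i g) T on D(A), for a nonzero real g. Then the spectrum of A is invariant under translation by i g: λ ∈ σ(A) implies λ + i g ∈ σ(A). -/
/-- Let `A` be a closed operator on a complex Hilbert space and `T` a
bounded invertible operator with `T(D(A)) = D(A)` and `T A = (A - i g) T` on `D(A)`,
for a nonzero real `g`. Then the spectrum of `A` (here: the set of `λ` for which
`A - λ` fails to be bijective from `D(A)` onto `H`) is invariant under translation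
by `i g`: if `λ ∈ σ(A)` then `λ + i g ∈ σ(A)`. -/
theorem stmt7 {H : Type*} [NormedAddCommGroup H] [InnerProductSpace ℂ H] [CompleteSpace H]
    (A : H →ₗ.[ℂ] H) (hA : A.IsClosed) (T : H ≃L[ℂ] H) (g : ℝ) (hg : g ≠ 0)
    (hTdom : ∀ u : A.domain, T (u : H) ∈ A.domain)
    (hTdom' : ∀ u : A.domain, T.symm (u : H) ∈ A.domain)
    (hcomm : ∀ u : A.domain, T (A u) = A ⟨T (u : H), hTdom u⟩ - (Complex.I * g) • T (u : H))
    (lam : ℂ)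
    (hlam : ¬ Function.Bijective (fun u : A.domain => A u - lam • (u : H))) :
    ¬ Function.Bijective
        (fun u : A.domain => A u - (lam + Complex.I * g) • (u : H)) := by
  intro hG
  apply hlam
  set φ : A.domain → A.domain := fun u => ⟨T (u : H), hTdom u⟩ with hφ
  set ψ : A.domain → A.domain := fun u => ⟨T.symm (u : H), hTdom' u⟩ with hψ
  have hφbij : Function.Bijective φ := by
    refine Function.bijective_iff_has_inverse.2 ⟨ψ, ?_, ?_⟩
    · intro u; apply Subtype.ext; simp [hφ, hψ]
    · intro u; apply Subtype.ext; simp [hφ, hψ]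
  have key : ∀ u : A.domain,
      (fun u : A.domain => A u - lam • (u : H)) u
        = T.symm ((fun u : A.domain => A u - (lam + Complex.I * g) • (u : H)) (φ u)) := by
    intro u
    have h := hcomm u
    have : A (φ u) - (lam + Complex.I * g) • (T (u : H))
        = T (A u - lam • (u : H)) := by
      rw [map_sub, map_smul, h, add_smul]
      abel
    simp only [hφ]
    rw [this]
    simp
  have : (fun u : A.domain => A u - lam • (u : H))
      = (T.symm : H → H) ∘ (fun u : A.domain => A u - (lam + Complex.I * g) • (u : H)) ∘ φ := by
    funext u; exact key u
  rw [this]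
  exact (T.symm.bijective.comp hG).comp hφbij
end

section
/- Let a be a continuous sesquilinear form on a Hilbert space V densely and continuously embedded in a Hilbert space H, satisfying the generalized coercivity conditions |a(u,u)| + |a(u,Φ₁u)| ≥ α‖u‖²_V and |a(u,u)| + |a(Φ₂u,u)| ≥ α‖u‖²_V for all u ∈ V, where Φ₁, Φ₂ ∈ L(V) extend to bounded operators on H and α > 0. Define D(S) = {u ∈ V : v ↦ a(u,v) is continuous on V in the H-norm} and S : D(S) → H by a(u,v) = ⟨Su, v⟩_H. Then S is bijective from D(S) onto H with bounded inverse S⁻¹ ∈ L(H). -/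
/-!
The form `a` is represented by a bounded operator `A` on `V`, `⟪A u, v⟫ = a u v`. Since
`|a(u,u)| + |a(u,Φ₁u)| ≤ (1 + ‖Φ₁‖) ‖A u‖ ‖u‖`, the first coercivity condition bounds `A` from
below, and likewise the second bounds `A†`; so `A` has closed and dense range, hence is
invertible. For `x = e u ∈ D(S)`, the equation `S x = g` says exactly `A u = e† g`, so
`S⁻¹ = e ∘ A⁻¹ ∘ e†` is bounded; that every `g` is attained uses the density of `V` in `H`.
-/

open ContinuousLinearMap InnerProductSpace
open scoped InnerProduct

section

variable {𝕜 E F : Type*} [RCLike 𝕜]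

theorem LinearMap.injective_of_norm_le_mul_norm [NormedAddCommGroup E] [NormedAddCommGroup F]
    [NormedSpace 𝕜 E] [NormedSpace 𝕜 F] (f : E →ₗ[𝕜] F) {C : ℝ}
    (hf : ∀ x, ‖x‖ ≤ C * ‖f x‖) : Function.Injective f := by
  refine (injective_iff_map_eq_zero f).mpr fun x hx => norm_le_zero_iff.mp ?_
  simpa [hx] using hf x

variable [NormedAddCommGroup E] [InnerProductSpace 𝕜 E]

theorem norm_le_of_sq_le_norm_inner_add_norm_inner (Φ : E →L[𝕜] E) {α : ℝ} (hα : 0 < α) {u w : E}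
    (h : α * ‖u‖ ^ 2 ≤ ‖⟪w, u⟫_𝕜‖ + ‖⟪w, Φ u⟫_𝕜‖) : ‖u‖ ≤ (1 + ‖Φ‖) / α * ‖w‖ := by
  have hΦu : ‖⟪w, Φ u⟫_𝕜‖ ≤ ‖w‖ * (‖Φ‖ * ‖u‖) :=
    (norm_inner_le_norm _ _).trans (by gcongr; exact Φ.le_opNorm u)
  have key : α * ‖u‖ * ‖u‖ ≤ (1 + ‖Φ‖) * ‖w‖ * ‖u‖ := by
    nlinarith [norm_inner_le_norm (𝕜 := 𝕜) w u]
  rw [div_mul_eq_mul_div, le_div_iff₀ hα, mul_comm]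
  rcases (norm_nonneg u).eq_or_lt with hu | hu
  · rw [← hu, mul_zero]; positivity
  · exact le_of_mul_le_mul_right key hu

variable [CompleteSpace E] [NormedAddCommGroup F] [InnerProductSpace 𝕜 F] [CompleteSpace F]

theorem ContinuousLinearMap.surjective_of_norm_le_of_injective_adjoint (A : E →L[𝕜] F) {C : ℝ}
    (hA : ∀ x, ‖x‖ ≤ C * ‖A x‖) (hA' : Function.Injective (A†)) : Function.Surjective A := by
  have hanti : AntilipschitzWith C.toNNReal A := A.antilipschitz_of_bound fun x =>
    (hA x).trans (mul_le_mul_of_nonneg_right (Real.le_coe_toNNReal C) (norm_nonneg _))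
  have : CompleteSpace A.range := (hanti.isClosed_range A.uniformContinuous).completeSpace_coe
  rw [← coe_coe, ← LinearMap.range_eq_top, ← Submodule.orthogonal_eq_bot_iff]
  exact A.orthogonal_range.trans (LinearMap.ker_eq_bot.mpr hA')

namespace InnerProductSpace

variable (B : E →L⋆[𝕜] E →L[𝕜] 𝕜) {α : ℝ}

theorem continuousLinearMapOfBilin_eq_adjoint_apply_iff (e : E →L[𝕜] F) (u : E) (g : F) :
    continuousLinearMapOfBilin B u = (e†) g ↔ ∀ v, B u v = ⟪g, e v⟫_𝕜 := by
  refine ⟨fun h v => ?_, fun h => ext_inner_right 𝕜 fun v => ?_⟩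
  · rw [← continuousLinearMapOfBilin_apply, h, adjoint_inner_left]
  · rw [continuousLinearMapOfBilin_apply, adjoint_inner_left, h]

theorem norm_le_of_coercive_continuousLinearMapOfBilin (Φ : E →L[𝕜] E) (hα : 0 < α)
    (h : ∀ u, α * ‖u‖ ^ 2 ≤ ‖B u u‖ + ‖B u (Φ u)‖) (u : E) :
    ‖u‖ ≤ (1 + ‖Φ‖) / α * ‖continuousLinearMapOfBilin B u‖ :=
  norm_le_of_sq_le_norm_inner_add_norm_inner Φ hα <| by
    simpa only [continuousLinearMapOfBilin_apply] using h u

theorem norm_le_of_coercive_adjoint_continuousLinearMapOfBilin (Φ : E →L[𝕜] E) (hα : 0 < α)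
    (h : ∀ u, α * ‖u‖ ^ 2 ≤ ‖B u u‖ + ‖B (Φ u) u‖) (u : E) :
    ‖u‖ ≤ (1 + ‖Φ‖) / α * ‖((continuousLinearMapOfBilin B)†) u‖ := by
  have hB (x : E) : B x u = ⟪x, ((continuousLinearMapOfBilin B)†) u⟫_𝕜 := by
    rw [adjoint_inner_right, continuousLinearMapOfBilin_apply]
  refine norm_le_of_sq_le_norm_inner_add_norm_inner Φ hα ?_
  simpa only [hB, norm_inner_symm u, norm_inner_symm (Φ u)] using h u

theorem surjective_continuousLinearMapOfBilin_of_coercive (Φ₁ Φ₂ : E →L[𝕜] E) (hα : 0 < α)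
    (h₁ : ∀ u, α * ‖u‖ ^ 2 ≤ ‖B u u‖ + ‖B u (Φ₁ u)‖)
    (h₂ : ∀ u, α * ‖u‖ ^ 2 ≤ ‖B u u‖ + ‖B (Φ₂ u) u‖) :
    Function.Surjective (continuousLinearMapOfBilin B) :=
  (continuousLinearMapOfBilin B).surjective_of_norm_le_of_injective_adjoint
    (norm_le_of_coercive_continuousLinearMapOfBilin B Φ₁ hα h₁)
    (LinearMap.injective_of_norm_le_mul_norm _
      (norm_le_of_coercive_adjoint_continuousLinearMapOfBilin B Φ₂ hα h₂))

end InnerProductSpace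

end

theorem stmt12_general {V H : Type*}
    [NormedAddCommGroup V] [InnerProductSpace ℂ V] [CompleteSpace V]
    [NormedAddCommGroup H] [InnerProductSpace ℂ H] [CompleteSpace H]
    (e : V →L[ℂ] H) (he_dense : DenseRange e)
    (a : V →ₛₗ[starRingEnd ℂ] V →ₗ[ℂ] ℂ)
    (habound : ∃ M : ℝ, ∀ u v : V, ‖a u v‖ ≤ M * ‖u‖ * ‖v‖)
    (Φ₁ Φ₂ : V →L[ℂ] V)
    (α : ℝ) (hα : 0 < α)
    (hcoer1 : ∀ u : V, α * ‖u‖ ^ 2 ≤ ‖a u u‖ + ‖a u (Φ₁ u)‖)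
    (hcoer2 : ∀ u : V, α * ‖u‖ ^ 2 ≤ ‖a u u‖ + ‖a (Φ₂ u) u‖)
    (S : H →ₗ.[ℂ] H)
    (hSdom : ∀ x : H, x ∈ S.domain ↔
      ∃ u : V, e u = x ∧ ∃ C : ℝ, ∀ v : V, ‖a u v‖ ≤ C * ‖e v‖)
    (hSval : ∀ (u : V) (hx : e u ∈ S.domain), ∀ v : V,
      a u v = (inner ℂ (S ⟨e u, hx⟩) (e v) : ℂ)) :
    Function.Bijective (fun x : S.domain => S x) ∧
      ∃ C : ℝ, 0 < C ∧ ∀ x : S.domain, ‖(x : H)‖ ≤ C * ‖S x‖ := by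
  obtain ⟨M, hM⟩ := habound
  set B := a.mkContinuous₂ M hM
  set A := continuousLinearMapOfBilin B
  have hA_bound := norm_le_of_coercive_continuousLinearMapOfBilin B Φ₁ hα hcoer1
  have hA_surj : Function.Surjective A :=
    surjective_continuousLinearMapOfBilin_of_coercive B Φ₁ Φ₂ hα hcoer1 hcoer2
  have hS_rep (x : S.domain) : ∃ u, e u = x ∧ A u = (e†) (S x) := by
    obtain ⟨u, hu, -⟩ := (hSdom x).mp x.2
    have hx : (⟨e u, hu ▸ x.2⟩ : S.domain) = x := Subtype.ext hu
    refine ⟨u, hu, (continuousLinearMapOfBilin_eq_adjoint_apply_iff B e u _).mpr ?_⟩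
    rw [← hx]
    exact hSval u _
  have hS_bound (x : S.domain) :
      ‖(x : H)‖ ≤ ‖e‖ * ((1 + ‖Φ₁‖) / α * ‖e†‖) * ‖S x‖ := by
    obtain ⟨u, hu, hAu⟩ := hS_rep x
    calc ‖(x : H)‖ = ‖e u‖ := by rw [hu]
      _ ≤ ‖e‖ * ‖u‖ := e.le_opNorm u
      _ ≤ ‖e‖ * ((1 + ‖Φ₁‖) / α * ‖(e†) (S x)‖) := by gcongr; exact hAu ▸ hA_bound u
      _ ≤ ‖e‖ * ((1 + ‖Φ₁‖) / α * (‖e†‖ * ‖S x‖)) := by gcongr; exact le_opNorm _ _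
      _ = _ := by ring
  have hS_surj : Function.Surjective (fun x : S.domain => S x) := by
    intro g
    obtain ⟨u, hu⟩ := hA_surj ((e†) g)
    have hau := (continuousLinearMapOfBilin_eq_adjoint_apply_iff B e u g).mp hu
    have hx : e u ∈ S.domain :=
      (hSdom _).mpr ⟨u, rfl, ‖g‖, fun v => (hau v).symm ▸ norm_inner_le_norm g (e v)⟩
    exact ⟨⟨e u, hx⟩, he_dense.eq_of_inner_left ℂ fun v => by rw [← hSval, ← hau]; rfl⟩
  refine ⟨⟨S.toFun.injective_of_norm_le_mul_norm hS_bound, hS_surj⟩,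
    ‖e‖ * ((1 + ‖Φ₁‖) / α * ‖e†‖) + 1, by positivity, fun x => (hS_bound x).trans ?_⟩
  gcongr
  exact le_add_of_nonneg_right zero_le_one

/-- generalized Lax–Milgram, bijectivity: Let `V` be a Hilbert space
densely and continuously embedded (via `e`) in a Hilbert space `H`, and let `a` be a
bounded sesquilinear form on `V` satisfying the generalized coercivity conditions
`|a(u,u)| + |a(u,Φ₁u)| ≥ α‖u‖²_V` and `|a(u,u)| + |a(Φ₂u,u)| ≥ α‖u‖²_V`, where
`Φ₁, Φ₂ ∈ L(V)` extend to bounded operators on `H` and `α > 0`.  Let `S` be the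
operator on `H` with domain `D(S) = {u ∈ V : v ↦ a(u,v) is H-continuous}` defined by
`a(u,v) = ⟨Su, v⟩_H`.  Then `S : D(S) → H` is bijective with bounded inverse. -/
theorem stmt12 {V H : Type*}
    [NormedAddCommGroup V] [InnerProductSpace ℂ V] [CompleteSpace V]
    [NormedAddCommGroup H] [InnerProductSpace ℂ H] [CompleteSpace H]
    (e : V →L[ℂ] H) (he_inj : Function.Injective e) (he_dense : DenseRange e)
    (a : V →ₛₗ[starRingEnd ℂ] V →ₗ[ℂ] ℂ)
    (habound : ∃ M : ℝ, ∀ u v : V, ‖a u v‖ ≤ M * ‖u‖ * ‖v‖)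
    (Φ₁ Φ₂ : V →L[ℂ] V)
    (hΦ₁ext : ∃ Ψ₁ : H →L[ℂ] H, ∀ v : V, Ψ₁ (e v) = e (Φ₁ v))
    (hΦ₂ext : ∃ Ψ₂ : H →L[ℂ] H, ∀ v : V, Ψ₂ (e v) = e (Φ₂ v))
    (α : ℝ) (hα : 0 < α)
    (hcoer1 : ∀ u : V, α * ‖u‖ ^ 2 ≤ ‖a u u‖ + ‖a u (Φ₁ u)‖)
    (hcoer2 : ∀ u : V, α * ‖u‖ ^ 2 ≤ ‖a u u‖ + ‖a (Φ₂ u) u‖)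
    (S : H →ₗ.[ℂ] H)
    (hSdom : ∀ x : H, x ∈ S.domain ↔
      ∃ u : V, e u = x ∧ ∃ C : ℝ, ∀ v : V, ‖a u v‖ ≤ C * ‖e v‖)
    (hSval : ∀ (u : V) (hx : e u ∈ S.domain), ∀ v : V,
      a u v = (inner ℂ (S ⟨e u, hx⟩) (e v) : ℂ)) :
    Function.Bijective (fun x : S.domain => S x) ∧
      ∃ C : ℝ, 0 < C ∧ ∀ x : S.domain, ‖(x : H)‖ ≤ C * ‖S x‖ :=
  stmt12_general e he_dense a habound Φ₁ Φ₂ α hα hcoer1 hcoer2 S hSdom hSval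
end

section
/- Under the hypotheses of the generalized Lax–Milgram theorem (same setting as above), the operator S is closed and its domain D(S) is dense in both V and H. -/
/-!
The form is represented by a bounded operator `A` on `V` with `⟪A u, v⟫ = a u v`. The first
coercivity inequality bounds `A` below, so `A` is injective with closed range; the second one
makes the orthogonal complement of the range trivial, so `A` is an isomorphism. Unwinding the
definition of `S`, `(x, y)` lies in its graph exactly when `x = e (A⁻¹ (e* y))`: the graph of `S`
is the graph of the bounded operator `e A⁻¹ e*` with the coordinates swapped, hence closed.
The domain contains the range of `A⁻¹ e*`, which is dense in `V` since `e` is injective, and its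
image under `e` is then dense in `H` since `e` has dense range.
-/

open ContinuousLinearMap InnerProductSpace

namespace InnerProductSpace

variable {𝕜 E : Type*} [RCLike 𝕜] [NormedAddCommGroup E] [InnerProductSpace 𝕜 E] [CompleteSpace E]
  {B : E →L⋆[𝕜] E →L[𝕜] 𝕜} {Φ : E →L[𝕜] E} {α : ℝ}

local postfix:1024 "♯" => continuousLinearMapOfBilin (𝕜 := 𝕜)

theorem mul_norm_le_mul_norm_continuousLinearMapOfBilin
    (hB : ∀ u, α * ‖u‖ ^ 2 ≤ ‖B u u‖ + ‖B u (Φ u)‖) (u : E) :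
    α * ‖u‖ ≤ (1 + ‖Φ‖) * ‖B♯ u‖ := by
  rcases eq_or_ne u 0 with rfl | hu
  · simp
  refine le_of_mul_le_mul_right ?_ (norm_pos_iff.mpr hu)
  calc α * ‖u‖ * ‖u‖ = α * ‖u‖ ^ 2 := by ring
    _ ≤ ‖⟪B♯ u, u⟫_𝕜‖ + ‖⟪B♯ u, Φ u⟫_𝕜‖ := by
      simpa only [continuousLinearMapOfBilin_apply] using hB u
    _ ≤ ‖B♯ u‖ * ‖u‖ + ‖B♯ u‖ * (‖Φ‖ * ‖u‖) := by
      gcongr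
      · exact norm_inner_le_norm _ _
      · exact (norm_inner_le_norm _ _).trans (by gcongr; exact Φ.le_opNorm u)
    _ = (1 + ‖Φ‖) * ‖B♯ u‖ * ‖u‖ := by ring

theorem antilipschitzWith_continuousLinearMapOfBilin (hα : 0 < α)
    (hB : ∀ u, α * ‖u‖ ^ 2 ≤ ‖B u u‖ + ‖B u (Φ u)‖) :
    AntilipschitzWith ⟨(1 + ‖Φ‖) / α, by positivity⟩ B♯ :=
  (B♯).antilipschitz_of_bound fun u => by
    show ‖u‖ ≤ (1 + ‖Φ‖) / α * ‖B♯ u‖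
    rw [div_mul_eq_mul_div, le_div_iff₀ hα, mul_comm]
    exact mul_norm_le_mul_norm_continuousLinearMapOfBilin hB u

theorem ker_continuousLinearMapOfBilin_eq_bot (hα : 0 < α)
    (hB : ∀ u, α * ‖u‖ ^ 2 ≤ ‖B u u‖ + ‖B u (Φ u)‖) : (B♯).ker = ⊥ :=
  LinearMap.ker_eq_bot.mpr (antilipschitzWith_continuousLinearMapOfBilin hα hB).injective

theorem orthogonal_range_continuousLinearMapOfBilin_eq_bot (hα : 0 < α)
    (hB : ∀ u, α * ‖u‖ ^ 2 ≤ ‖B u u‖ + ‖B (Φ u) u‖) : (B♯).rangeᗮ = ⊥ := by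
  refine (Submodule.eq_bot_iff _).mpr fun w hw => ?_
  have hBw : ∀ u, B u w = 0 := fun u => by
    rw [← continuousLinearMapOfBilin_apply]
    exact hw _ ⟨u, rfl⟩
  have : α * ‖w‖ ^ 2 ≤ 0 := by simpa [hBw] using hB w
  exact norm_eq_zero.mp (pow_eq_zero_iff two_ne_zero |>.mp
    (le_antisymm (nonpos_of_mul_nonpos_right this hα) (by positivity)))

theorem range_continuousLinearMapOfBilin_eq_top {Φ₁ Φ₂ : E →L[𝕜] E} (hα : 0 < α)
    (hB₁ : ∀ u, α * ‖u‖ ^ 2 ≤ ‖B u u‖ + ‖B u (Φ₁ u)‖)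
    (hB₂ : ∀ u, α * ‖u‖ ^ 2 ≤ ‖B u u‖ + ‖B (Φ₂ u) u‖) : (B♯).range = ⊤ := by
  have : CompleteSpace (B♯).range :=
    ((antilipschitzWith_continuousLinearMapOfBilin hα hB₁).isClosed_range
      (B♯).uniformContinuous).completeSpace_coe
  exact Submodule.orthogonal_eq_bot_iff.mp
    (orthogonal_range_continuousLinearMapOfBilin_eq_bot hα hB₂)

end InnerProductSpace

section FormOperator

variable {𝕜 V H : Type*} [RCLike 𝕜]
  [NormedAddCommGroup V] [InnerProductSpace 𝕜 V] [NormedAddCommGroup H] [InnerProductSpace 𝕜 H]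

theorem ContinuousLinearMap.denseRange_adjoint [CompleteSpace V] [CompleteSpace H]
    {e : V →L[𝕜] H} (he : Function.Injective e) :
    DenseRange (adjoint e) := by
  have : (adjoint e).rangeᗮ = ⊥ := by
    rw [orthogonal_range, adjoint_adjoint]
    exact LinearMap.ker_eq_bot.mpr he
  rw [DenseRange, ← coe_coe, ← LinearMap.coe_range]
  exact Submodule.dense_iff_topologicalClosure_eq_top.mpr
    (Submodule.topologicalClosure_eq_top_iff.mpr this)

theorem forall_apply_eq_inner_iff [CompleteSpace V] [CompleteSpace H]
    {a : V →ₛₗ[starRingEnd 𝕜] V →ₗ[𝕜] 𝕜} {A : V →L[𝕜] V}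
    (hA : ∀ u v, ⟪A u, v⟫_𝕜 = a u v) (e : V →L[𝕜] H) (u : V) (y : H) :
    (∀ v, a u v = ⟪y, e v⟫_𝕜) ↔ A u = adjoint e y := by
  simp_rw [← hA, ← adjoint_inner_left]
  exact ⟨ext_inner_right 𝕜, fun h v => by rw [h]⟩

theorem LinearPMap.mem_graph_iff_of_form {e : V →L[𝕜] H} (he : DenseRange e)
    {a : V →ₛₗ[starRingEnd 𝕜] V →ₗ[𝕜] 𝕜} {S : H →ₗ.[𝕜] H}
    (hSdom : ∀ x : H, x ∈ S.domain ↔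
      ∃ u : V, e u = x ∧ ∃ C : ℝ, ∀ v : V, ‖a u v‖ ≤ C * ‖e v‖)
    (hSval : ∀ (u : V) (hx : e u ∈ S.domain), ∀ v : V, a u v = ⟪S ⟨e u, hx⟩, e v⟫_𝕜)
    {x y : H} : (x, y) ∈ S.graph ↔ ∃ u, e u = x ∧ ∀ v, a u v = ⟪y, e v⟫_𝕜 := by
  rw [LinearPMap.mem_graph_iff]
  constructor
  · rintro ⟨⟨x, hx⟩, rfl, rfl⟩
    obtain ⟨u, rfl, -⟩ := (hSdom x).mp hx
    exact ⟨u, rfl, hSval u hx⟩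
  · rintro ⟨u, rfl, hu⟩
    have hx : e u ∈ S.domain :=
      (hSdom _).mpr ⟨u, rfl, ‖y‖, fun v => hu v ▸ norm_inner_le_norm _ _⟩
    exact ⟨⟨e u, hx⟩, rfl, he.eq_of_inner_left 𝕜 fun v => (hSval u hx v).symm.trans (hu v)⟩

end FormOperator

theorem stmt13_general {V H : Type*}
    [NormedAddCommGroup V] [InnerProductSpace ℂ V] [CompleteSpace V]
    [NormedAddCommGroup H] [InnerProductSpace ℂ H] [CompleteSpace H]
    (e : V →L[ℂ] H) (he_inj : Function.Injective e) (he_dense : DenseRange e)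
    (a : V →ₛₗ[starRingEnd ℂ] V →ₗ[ℂ] ℂ)
    (habound : ∃ M : ℝ, ∀ u v : V, ‖a u v‖ ≤ M * ‖u‖ * ‖v‖)
    (Φ₁ Φ₂ : V →L[ℂ] V)
    (α : ℝ) (hα : 0 < α)
    (hcoer1 : ∀ u : V, α * ‖u‖ ^ 2 ≤ ‖a u u‖ + ‖a u (Φ₁ u)‖)
    (hcoer2 : ∀ u : V, α * ‖u‖ ^ 2 ≤ ‖a u u‖ + ‖a (Φ₂ u) u‖)
    (S : H →ₗ.[ℂ] H)
    (hSdom : ∀ x : H, x ∈ S.domain ↔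
      ∃ u : V, e u = x ∧ ∃ C : ℝ, ∀ v : V, ‖a u v‖ ≤ C * ‖e v‖)
    (hSval : ∀ (u : V) (hx : e u ∈ S.domain), ∀ v : V,
      a u v = (inner ℂ (S ⟨e u, hx⟩) (e v) : ℂ)) :
    S.IsClosed ∧ Dense (S.domain : Set H) ∧ Dense {u : V | e u ∈ S.domain} := by
  obtain ⟨M, hM⟩ := habound
  set B := a.mkContinuous₂ M hM
  let A : V ≃L[ℂ] V := .ofBijective (continuousLinearMapOfBilin B)
    (ker_continuousLinearMapOfBilin_eq_bot hα hcoer1)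
    (range_continuousLinearMapOfBilin_eq_top hα hcoer1 hcoer2)
  let T : H →L[ℂ] V := A.symm ∘L adjoint e
  have hgraph : (S.graph : Set (H × H)) = {p | p.1 = e (T p.2)} := by
    ext ⟨x, y⟩
    simp only [SetLike.mem_coe, LinearPMap.mem_graph_iff_of_form he_dense hSdom hSval,
      forall_apply_eq_inner_iff (continuousLinearMapOfBilin_apply B), Set.mem_ofPred_eq]
    exact ⟨fun ⟨u, hx, hu⟩ => hx ▸ congrArg e (A.eq_symm_apply.mpr hu),
      fun hx => ⟨T y, hx.symm, A.apply_symm_apply _⟩⟩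
  have hdomV : Dense {u : V | e u ∈ S.domain} := by
    refine (A.symm.surjective.denseRange.comp (denseRange_adjoint he_inj)
      A.symm.continuous).mono ?_
    rintro _ ⟨y, rfl⟩
    exact S.mem_domain_of_mem_graph (hgraph ▸ rfl : (e (T y), y) ∈ (S.graph : Set (H × H)))
  refine ⟨?_, (he_dense.dense_image e.continuous hdomV).mono (Set.image_preimage_subset e _),
    hdomV⟩
  show IsClosed (S.graph : Set (H × H))
  rw [hgraph]
  exact isClosed_eq continuous_fst (e.continuous.comp (T.continuous.comp continuous_snd))

/-- generalized Lax–Milgram, bijectivity: Let `V` be a Hilbert space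
densely and continuously embedded (via `e`) in a Hilbert space `H`, and let `a` be a
bounded sesquilinear form on `V` satisfying the generalized coercivity conditions
`|a(u,u)| + |a(u,Φ₁u)| ≥ α‖u‖²_V` and `|a(u,u)| + |a(Φ₂u,u)| ≥ α‖u‖²_V`, where
`Φ₁, Φ₂ ∈ L(V)` extend to bounded operators on `H` and `α > 0`.  Let `S` be the
operator on `H` with domain `D(S) = {u ∈ V : v ↦ a(u,v) is H-continuous}` defined by
`a(u,v) = ⟨Su, v⟩_H`.  Then `S` is a closed operator and its domain `D(S)` is dense in both `V` and `H`. -/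
theorem stmt13 {V H : Type*}
    [NormedAddCommGroup V] [InnerProductSpace ℂ V] [CompleteSpace V]
    [NormedAddCommGroup H] [InnerProductSpace ℂ H] [CompleteSpace H]
    (e : V →L[ℂ] H) (he_inj : Function.Injective e) (he_dense : DenseRange e)
    (a : V →ₛₗ[starRingEnd ℂ] V →ₗ[ℂ] ℂ)
    (habound : ∃ M : ℝ, ∀ u v : V, ‖a u v‖ ≤ M * ‖u‖ * ‖v‖)
    (Φ₁ Φ₂ : V →L[ℂ] V)
    (hΦ₁ext : ∃ Ψ₁ : H →L[ℂ] H, ∀ v : V, Ψ₁ (e v) = e (Φ₁ v))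
    (hΦ₂ext : ∃ Ψ₂ : H →L[ℂ] H, ∀ v : V, Ψ₂ (e v) = e (Φ₂ v))
    (α : ℝ) (hα : 0 < α)
    (hcoer1 : ∀ u : V, α * ‖u‖ ^ 2 ≤ ‖a u u‖ + ‖a u (Φ₁ u)‖)
    (hcoer2 : ∀ u : V, α * ‖u‖ ^ 2 ≤ ‖a u u‖ + ‖a (Φ₂ u) u‖)
    (S : H →ₗ.[ℂ] H)
    (hSdom : ∀ x : H, x ∈ S.domain ↔
      ∃ u : V, e u = x ∧ ∃ C : ℝ, ∀ v : V, ‖a u v‖ ≤ C * ‖e v‖)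
    (hSval : ∀ (u : V) (hx : e u ∈ S.domain), ∀ v : V,
      a u v = (inner ℂ (S ⟨e u, hx⟩) (e v) : ℂ)) :
    S.IsClosed ∧ Dense (S.domain : Set H) ∧ Dense {u : V | e u ∈ S.domain} :=
  stmt13_general e he_inj he_dense a habound Φ₁ Φ₂ α hα hcoer1 hcoer2 S hSdom hSval
end

section
/- In the generalized Lax–Milgram setting, let b(u,v) := conj(a(v,u)) be the conjugate sesquilinear form, which satisfies the same hypotheses with Φ₁ and Φ₂ exchanged, and let S₁ be the operator associated with b. Then S* = S₁ and S₁* = S. -/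
/-!
By Riesz, `a(u,v) = ⟨Tu, v⟩_V` for a bounded operator `T` on `V`, and then the conjugate form is
`b(u,v) = ⟨T†u, v⟩_V`. The two coercivity conditions say that `T` and `T†` are bounded below, so
both are bijective. Solving `Tu = e†f` shows that `S` is surjective, and since `e†` has dense range
(`e` is injective) and `T` is open, `D(S)` is dense; likewise `S₁` is surjective. The forms being
conjugate makes `S₁` a formal adjoint of `S`, so `S₁ ⊆ S*`, and `S*` is injective because `S` is
surjective; an injective operator has no proper surjective restriction, so `S* = S₁`. Exchanging
`T` and `T†` gives `S₁* = S`.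
-/

open scoped ComplexConjugate InnerProductSpace

namespace LinearPMap

variable {𝕜 E F : Type*} [RCLike 𝕜]
  [NormedAddCommGroup E] [InnerProductSpace 𝕜 E] [CompleteSpace E]
  [NormedAddCommGroup F] [InnerProductSpace 𝕜 F]
  {S : E →ₗ.[𝕜] F} {S₁ : F →ₗ.[𝕜] E}

theorem adjoint_injective_of_surjective (hS : Dense (S.domain : Set E))
    (hsurj : Function.Surjective S) : Function.Injective S.adjoint := by
  intro x y hxy
  refine Subtype.ext (ext_inner_right 𝕜 fun f => ?_)
  obtain ⟨q, rfl⟩ := hsurj f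
  rw [← adjoint_isFormalAdjoint hS x q, ← adjoint_isFormalAdjoint hS y q, hxy]

theorem adjoint_eq_of_isFormalAdjoint_of_surjective (hS : Dense (S.domain : Set E))
    (hsurj : Function.Surjective S) (h : S.IsFormalAdjoint S₁)
    (hsurj₁ : Function.Surjective S₁) : S.adjoint = S₁ := by
  have hle : S₁ ≤ S.adjoint := h.le_adjoint hS
  refine (eq_of_le_of_domain_eq hle (le_antisymm hle.1 fun x hx => ?_)).symm
  obtain ⟨y, hy⟩ := hsurj₁ (S.adjoint ⟨x, hx⟩)
  have hyx : (⟨y, hle.1 y.2⟩ : S.adjoint.domain) = ⟨x, hx⟩ :=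
    adjoint_injective_of_surjective hS hsurj ((hle.2 rfl).symm.trans hy)
  have hyx' : (y : F) = x := congrArg Subtype.val hyx
  exact hyx' ▸ y.2

end LinearPMap

namespace ContinuousLinearMap

variable {𝕜 E F : Type*} [RCLike 𝕜]
  [NormedAddCommGroup E] [InnerProductSpace 𝕜 E] [CompleteSpace E]
  [NormedAddCommGroup F] [InnerProductSpace 𝕜 F] [CompleteSpace F]

theorem denseRange_adjoint_of_injective {T : E →L[𝕜] F} (hT : Function.Injective T) :
    DenseRange T.adjoint := by
  change Dense (LinearMap.range (T.adjoint : F →ₗ[𝕜] E) : Set E)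
  rw [Submodule.dense_iff_topologicalClosure_eq_top,
    Submodule.topologicalClosure_eq_top_iff, orthogonal_range, adjoint_adjoint]
  exact LinearMap.ker_eq_bot.2 hT

theorem surjective_of_antilipschitz_of_injective_adjoint {T : E →L[𝕜] F} {K : NNReal}
    (hT : AntilipschitzWith K T) (h : Function.Injective T.adjoint) : Function.Surjective T := by
  have hclosed : IsClosed (T.range : Set F) := hT.isClosed_range T.uniformContinuous
  refine (LinearMap.range_eq_top (f := (T : E →ₗ[𝕜] F))).1 ?_
  rw [← hclosed.submodule_topologicalClosure_eq,
    Submodule.topologicalClosure_eq_top_iff, orthogonal_range]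
  exact LinearMap.ker_eq_bot.2 h

theorem surjective_and_surjective_adjoint_of_antilipschitz {T : E →L[𝕜] F} {K K' : NNReal}
    (hT : AntilipschitzWith K T) (hT' : AntilipschitzWith K' T.adjoint) :
    Function.Surjective T ∧ Function.Surjective T.adjoint :=
  ⟨surjective_of_antilipschitz_of_injective_adjoint hT hT'.injective,
    surjective_of_antilipschitz_of_injective_adjoint hT'
      (by rw [adjoint_adjoint]; exact hT.injective)⟩

end ContinuousLinearMap

section Forms

variable {𝕜 V H : Type*} [RCLike 𝕜]
  [NormedAddCommGroup V] [InnerProductSpace 𝕜 V] [NormedAddCommGroup H] [InnerProductSpace 𝕜 H]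

theorem exists_inner_eq_of_bounded [CompleteSpace V] (a : V →ₛₗ[starRingEnd 𝕜] V →ₗ[𝕜] 𝕜)
    (ha : ∃ M : ℝ, ∀ u v : V, ‖a u v‖ ≤ M * ‖u‖ * ‖v‖) :
    ∃ T : V →L[𝕜] V, ∀ u v : V, ⟪T u, v⟫_𝕜 = a u v := by
  obtain ⟨M, hM⟩ := ha
  exact ⟨InnerProductSpace.continuousLinearMapOfBilin (a.mkContinuous₂ M hM),
    InnerProductSpace.continuousLinearMapOfBilin_apply _⟩

theorem ContinuousLinearMap.exists_antilipschitz_of_coercive (T Φ : V →L[𝕜] V) {α : ℝ}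
    (hα : 0 < α) (h : ∀ u : V, α * ‖u‖ ^ 2 ≤ ‖⟪T u, u⟫_𝕜‖ + ‖⟪T u, Φ u⟫_𝕜‖) :
    ∃ K, AntilipschitzWith K T := by
  refine ⟨(⟨(1 + ‖Φ‖) / α, by positivity⟩ : NNReal), T.antilipschitz_of_bound fun u => ?_⟩
  rcases eq_or_ne u 0 with rfl | hu
  · simp
  have hu : 0 < ‖u‖ := norm_pos_iff.2 hu
  have hbound : α * ‖u‖ * ‖u‖ ≤ (1 + ‖Φ‖) * ‖T u‖ * ‖u‖ :=
    calc α * ‖u‖ * ‖u‖ = α * ‖u‖ ^ 2 := by ring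
      _ ≤ ‖⟪T u, u⟫_𝕜‖ + ‖⟪T u, Φ u⟫_𝕜‖ := h u
      _ ≤ ‖T u‖ * ‖u‖ + ‖T u‖ * (‖Φ‖ * ‖u‖) :=
        add_le_add (norm_inner_le_norm _ _)
          ((norm_inner_le_norm _ _).trans (by gcongr; exact Φ.le_opNorm u))
      _ = (1 + ‖Φ‖) * ‖T u‖ * ‖u‖ := by ring
  change ‖u‖ ≤ (1 + ‖Φ‖) / α * ‖T u‖
  rw [div_mul_eq_mul_div, le_div_iff₀ hα, mul_comm]
  exact le_of_mul_le_mul_right hbound hu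

/-- The operator associated with the form `a`, with `V` identified with the subspace `e(V)` of
`H`: `D(S) = {u ∈ V : v ↦ a(u,v) is H-continuous}` and `a(u,v) = ⟨Su, v⟩_H`. -/
structure IsAssociatedOperator (e : V →L[𝕜] H) (a : V → V → 𝕜) (S : H →ₗ.[𝕜] H) : Prop where
  mem_domain_iff : ∀ x : H, x ∈ S.domain ↔
    ∃ u : V, e u = x ∧ ∃ C : ℝ, ∀ v : V, ‖a u v‖ ≤ C * ‖e v‖
  apply_inner : ∀ (u : V) (hx : e u ∈ S.domain) (v : V), a u v = ⟪S ⟨e u, hx⟩, e v⟫_𝕜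

namespace IsAssociatedOperator

variable {e : V →L[𝕜] H} {a b : V → V → 𝕜} {S S₁ : H →ₗ.[𝕜] H} {T : V →L[𝕜] V}

theorem exists_apply_eq (hS : IsAssociatedOperator e a S) (he : DenseRange e) {u : V} {f : H}
    (h : ∀ v : V, a u v = ⟪f, e v⟫_𝕜) : ∃ hx : e u ∈ S.domain, S ⟨e u, hx⟩ = f := by
  have hx : e u ∈ S.domain := (hS.mem_domain_iff _).2
    ⟨u, rfl, ‖f‖, fun v => (h v).symm ▸ norm_inner_le_norm f (e v)⟩
  exact ⟨hx, he.eq_of_inner_left 𝕜 fun v => by rw [← hS.apply_inner, h]⟩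

theorem surjective [CompleteSpace V] [CompleteSpace H]
    (hS : IsAssociatedOperator e (fun u v => ⟪T u, v⟫_𝕜) S)
    (he : DenseRange e) (hT : Function.Surjective T) : Function.Surjective S := by
  intro f
  obtain ⟨u, hu⟩ := hT (e.adjoint f)
  obtain ⟨hx, hSu⟩ := hS.exists_apply_eq he (u := u) (f := f) fun v => by
    rw [hu, ContinuousLinearMap.adjoint_inner_left]
  exact ⟨_, hSu⟩

theorem dense_domain [CompleteSpace V] [CompleteSpace H]
    (hS : IsAssociatedOperator e (fun u v => ⟪T u, v⟫_𝕜) S)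
    (he_inj : Function.Injective e) (he : DenseRange e) (hT : Function.Surjective T) :
    Dense (S.domain : Set H) := by
  have hdense : Dense (T ⁻¹' Set.range e.adjoint) :=
    (ContinuousLinearMap.denseRange_adjoint_of_injective he_inj).preimage (T.isOpenMap hT)
  refine (he.dense_image e.continuous hdense).mono ?_
  rintro _ ⟨u, ⟨f, hf⟩, rfl⟩
  obtain ⟨hx, -⟩ := hS.exists_apply_eq he (u := u) (f := f) fun v => by
    rw [← hf, ContinuousLinearMap.adjoint_inner_left]
  exact hx

theorem isFormalAdjoint (hS : IsAssociatedOperator e a S) (hS₁ : IsAssociatedOperator e b S₁)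
    (hab : ∀ u v, b u v = conj (a v u)) : S.IsFormalAdjoint S₁ := by
  rintro ⟨_, hp⟩ ⟨_, hq⟩
  obtain ⟨u, rfl, -⟩ := (hS.mem_domain_iff _).1 hp
  obtain ⟨w, rfl, -⟩ := (hS₁.mem_domain_iff _).1 hq
  rw [← hS.apply_inner, ← inner_conj_symm, ← hS₁.apply_inner, hab, RCLike.conj_conj]

theorem adjoint_eq [CompleteSpace V] [CompleteSpace H]
    (hS : IsAssociatedOperator e (fun u v => ⟪T u, v⟫_𝕜) S)
    (hS₁ : IsAssociatedOperator e (fun u v => ⟪T.adjoint u, v⟫_𝕜) S₁)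
    (he_inj : Function.Injective e) (he : DenseRange e)
    (hT : Function.Surjective T) (hT' : Function.Surjective T.adjoint) : S.adjoint = S₁ :=
  LinearPMap.adjoint_eq_of_isFormalAdjoint_of_surjective (hS.dense_domain he_inj he hT)
    (hS.surjective he hT)
    (hS.isFormalAdjoint hS₁ fun u v => by
      rw [ContinuousLinearMap.adjoint_inner_left, inner_conj_symm])
    (hS₁.surjective he hT')

end IsAssociatedOperator

end Forms

theorem stmt14_general {V H : Type*}
    [NormedAddCommGroup V] [InnerProductSpace ℂ V] [CompleteSpace V]
    [NormedAddCommGroup H] [InnerProductSpace ℂ H] [CompleteSpace H]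
    (e : V →L[ℂ] H) (he_inj : Function.Injective e) (he_dense : DenseRange e)
    (a : V →ₛₗ[starRingEnd ℂ] V →ₗ[ℂ] ℂ)
    (habound : ∃ M : ℝ, ∀ u v : V, ‖a u v‖ ≤ M * ‖u‖ * ‖v‖)
    (Φ₁ Φ₂ : V →L[ℂ] V)
    (α : ℝ) (hα : 0 < α)
    (hcoer1 : ∀ u : V, α * ‖u‖ ^ 2 ≤ ‖a u u‖ + ‖a u (Φ₁ u)‖)
    (hcoer2 : ∀ u : V, α * ‖u‖ ^ 2 ≤ ‖a u u‖ + ‖a (Φ₂ u) u‖)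
    (S : H →ₗ.[ℂ] H)
    (hSdom : ∀ x : H, x ∈ S.domain ↔
      ∃ u : V, e u = x ∧ ∃ C : ℝ, ∀ v : V, ‖a u v‖ ≤ C * ‖e v‖)
    (hSval : ∀ (u : V) (hx : e u ∈ S.domain), ∀ v : V,
      a u v = (inner ℂ (S ⟨e u, hx⟩) (e v) : ℂ))
    (S₁ : H →ₗ.[ℂ] H)
    (hS₁dom : ∀ x : H, x ∈ S₁.domain ↔
      ∃ u : V, e u = x ∧ ∃ C : ℝ, ∀ v : V, ‖(starRingEnd ℂ) (a v u)‖ ≤ C * ‖e v‖)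
    (hS₁val : ∀ (u : V) (hx : e u ∈ S₁.domain), ∀ v : V,
      (starRingEnd ℂ) (a v u) = (inner ℂ (S₁ ⟨e u, hx⟩) (e v) : ℂ)) :
    S.adjoint = S₁ ∧ S₁.adjoint = S := by
  obtain ⟨T, hT⟩ := exists_inner_eq_of_bounded a habound
  have hT' : ∀ u v, ⟪T.adjoint u, v⟫_ℂ = conj (a v u) := fun u v => by
    rw [ContinuousLinearMap.adjoint_inner_left, ← inner_conj_symm, hT]
  obtain ⟨K, hK⟩ := T.exists_antilipschitz_of_coercive Φ₁ hα (by simpa only [hT] using hcoer1)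
  obtain ⟨K', hK'⟩ := T.adjoint.exists_antilipschitz_of_coercive Φ₂ hα
    (by simpa only [hT', RCLike.norm_conj] using hcoer2)
  obtain ⟨hTsurj, hT'surj⟩ :=
    ContinuousLinearMap.surjective_and_surjective_adjoint_of_antilipschitz hK hK'
  have hS : IsAssociatedOperator e (fun u v => ⟪T u, v⟫_ℂ) S := by
    simpa only [hT] using (⟨hSdom, hSval⟩ : IsAssociatedOperator e (fun u v => a u v) S)
  have hS₁ : IsAssociatedOperator e (fun u v => ⟪T.adjoint u, v⟫_ℂ) S₁ := by
    simpa only [hT'] using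
      (⟨hS₁dom, hS₁val⟩ : IsAssociatedOperator e (fun u v => conj (a v u)) S₁)
  refine ⟨hS.adjoint_eq hS₁ he_inj he_dense hTsurj hT'surj, ?_⟩
  rw [← T.adjoint_adjoint] at hS hTsurj
  exact hS₁.adjoint_eq hS he_inj he_dense hT'surj hTsurj

/-- generalized Lax–Milgram, bijectivity: Let `V` be a Hilbert space
densely and continuously embedded (via `e`) in a Hilbert space `H`, and let `a` be a
bounded sesquilinear form on `V` satisfying the generalized coercivity conditions
`|a(u,u)| + |a(u,Φ₁u)| ≥ α‖u‖²_V` and `|a(u,u)| + |a(Φ₂u,u)| ≥ α‖u‖²_V`, where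
`Φ₁, Φ₂ ∈ L(V)` extend to bounded operators on `H` and `α > 0`.  Let `S` be the
operator on `H` associated to `a` (domain `D(S) = {u ∈ V : v ↦ a(u,v) is H-continuous}`,
`a(u,v) = ⟨Su, v⟩_H`) and let `S₁` be the operator associated in the same way to the
conjugate sesquilinear form `b(u,v) := conj(a(v,u))`.  Then `S* = S₁` and `S₁* = S`. -/
theorem stmt14 {V H : Type*}
    [NormedAddCommGroup V] [InnerProductSpace ℂ V] [CompleteSpace V]
    [NormedAddCommGroup H] [InnerProductSpace ℂ H] [CompleteSpace H]
    (e : V →L[ℂ] H) (he_inj : Function.Injective e) (he_dense : DenseRange e)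
    (a : V →ₛₗ[starRingEnd ℂ] V →ₗ[ℂ] ℂ)
    (habound : ∃ M : ℝ, ∀ u v : V, ‖a u v‖ ≤ M * ‖u‖ * ‖v‖)
    (Φ₁ Φ₂ : V →L[ℂ] V)
    (hΦ₁ext : ∃ Ψ₁ : H →L[ℂ] H, ∀ v : V, Ψ₁ (e v) = e (Φ₁ v))
    (hΦ₂ext : ∃ Ψ₂ : H →L[ℂ] H, ∀ v : V, Ψ₂ (e v) = e (Φ₂ v))
    (α : ℝ) (hα : 0 < α)
    (hcoer1 : ∀ u : V, α * ‖u‖ ^ 2 ≤ ‖a u u‖ + ‖a u (Φ₁ u)‖)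
    (hcoer2 : ∀ u : V, α * ‖u‖ ^ 2 ≤ ‖a u u‖ + ‖a (Φ₂ u) u‖)
    (S : H →ₗ.[ℂ] H)
    (hSdom : ∀ x : H, x ∈ S.domain ↔
      ∃ u : V, e u = x ∧ ∃ C : ℝ, ∀ v : V, ‖a u v‖ ≤ C * ‖e v‖)
    (hSval : ∀ (u : V) (hx : e u ∈ S.domain), ∀ v : V,
      a u v = (inner ℂ (S ⟨e u, hx⟩) (e v) : ℂ))
    (S₁ : H →ₗ.[ℂ] H)
    (hS₁dom : ∀ x : H, x ∈ S₁.domain ↔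
      ∃ u : V, e u = x ∧ ∃ C : ℝ, ∀ v : V, ‖(starRingEnd ℂ) (a v u)‖ ≤ C * ‖e v‖)
    (hS₁val : ∀ (u : V) (hx : e u ∈ S₁.domain), ∀ v : V,
      (starRingEnd ℂ) (a v u) = (inner ℂ (S₁ ⟨e u, hx⟩) (e v) : ℂ)) :
    S.adjoint = S₁ ∧ S₁.adjoint = S :=
  stmt14_general e he_inj he_dense a habound Φ₁ Φ₂ α hα hcoer1 hcoer2 S hSdom hSval S₁ hS₁dom hS₁val
end
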